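/- The integral over three copies of the unit sphere 𝕊² ⊂ ℝ³ of the reciprocal of the absolute value of the determinant diverges: ∫_{𝕊²} dω₁ ∫_{𝕊²} dω₂ ∫_{𝕊²} dω₃ |det(ω₁, ω₂, ω₃)|^{−1} = +∞, where det(ω₁, ω₂, ω₃) is the determinant of the 3×3 matrix with columns ω₁, ω₂, ω₃ and the integrals are with respect to the surface measure on 𝕊². -/

import Mathlib

noncomputable section

open MeasureTheory Complex Filter
open scoped ENNReal NNReal Real InnerProductSpace FourierTransform ComplexOrder

/-- Euclidean space `ℝ^d`. -/
abbrev Rd (d : ℕ) : Type := EuclideanSpace ℝ (Fin d)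

/-- The Hilbert space `L²(ℝ^d, ℂ)`. -/
abbrev L2 (d : ℕ) : Type := MeasureTheory.Lp ℂ 2 (volume : Measure (Rd d))

/-- `U` is the free Schrödinger propagator family `t ↦ e^{itΔ}` on `L²(ℝ^d)`: it is
(uniquely) characterized by the fact that for a Schwartz initial datum `f`, `(U t) f` is the
Schwartz function whose (Mathlib-normalized) Fourier transform is `e^{-4π²it|ξ|²} (𝓕 f)(ξ)`,
i.e. `U t` is the unitary Fourier multiplier with symbol `e^{-it|ξ|²}` in the
`(2π)^{-d/2} ∫ e^{-ix·ξ}` normalization of the Fourier transform. -/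
def IsSchrodingerPropagator {d : ℕ} (U : ℝ → (L2 d ≃ₗᵢ[ℂ] L2 d)) : Prop :=
  ∀ (t : ℝ) (f g : SchwartzMap (Rd d) ℂ) (u : L2 d),
    (u : Rd d → ℂ) =ᵐ[volume] f →
    (∀ ξ : Rd d, 𝓕 (g : Rd d → ℂ) ξ
        = Complex.exp (-(Complex.I * t * (4 * (π : ℂ) ^ 2 * (‖ξ‖ : ℂ) ^ 2))) * 𝓕 (f : Rd d → ℂ) ξ) →
    ((U t) u : Rd d → ℂ) =ᵐ[volume] g

/-!
For fixed `ω₁, ω₂` the determinant is the linear form `ω ↦ ⟪ω₁ × ω₂, ω⟫`, so it suffices that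
`∫_{S^{d-1}} |⟪n, ω⟫|⁻¹ dω = ∞` for every `n` when `d ≥ 2`. For `n = 0` the integrand is `∞`.
Otherwise, in polar coordinates the integral of `|⟪n, x⟫|⁻¹` over a ball of radius `R` is this
spherical integral times the finite radial integral `∫₀ᴿ r^(d-1) r⁻¹ dr`; but after rotating `n`
onto a coordinate axis the ball contains a cube, on which `|x₀|⁻¹` is not integrable.
-/

open Set Metric Module

theorem ENNReal.inv_ofReal_inv_mul {c : ℝ} (hc : 0 < c) (a : ℝ) :
    (ENNReal.ofReal (c⁻¹ * a))⁻¹ = ENNReal.ofReal c * (ENNReal.ofReal a)⁻¹ := by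
  rw [ENNReal.ofReal_mul (inv_nonneg.2 hc.le),
    ENNReal.mul_inv (Or.inl (by simpa using hc)) (Or.inl ENNReal.ofReal_ne_top),
    ENNReal.ofReal_inv_of_pos hc, inv_inv]

theorem setLIntegral_Icc_inv_abs_eq_top : ∫⁻ t in Icc (-1 : ℝ) 1, (ENNReal.ofReal |t|)⁻¹ = ∞ := by
  have h_not_int : ¬ IntegrableOn (fun t : ℝ => t⁻¹) (Icc (-1) 1) := fun h => by
    have := (intervalIntegrable_iff_integrableOn_Icc_of_le (by norm_num)).2 h
    norm_num at this
  have h_enorm : ∫⁻ t in Icc (-1 : ℝ) 1, ‖t⁻¹‖ₑ = ∞ := by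
    by_contra h
    exact h_not_int ⟨measurable_inv.aestronglyMeasurable, lt_top_iff_ne_top.2 h⟩
  refine top_unique (h_enorm ▸ lintegral_mono fun t => ?_)
  rcases eq_or_ne t 0 with rfl | ht
  · simp
  · rw [← ofReal_norm, norm_inv, Real.norm_eq_abs, ENNReal.ofReal_inv_of_pos (abs_pos.2 ht)]

theorem setLIntegral_univ_pi_Icc_inv_abs_eq_top {ι : Type*} [Fintype ι] (i : ι) :
    ∫⁻ x in univ.pi fun _ : ι => Icc (-1 : ℝ) 1, (ENNReal.ofReal |x i|)⁻¹ = ∞ := by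
  classical
  have h_meas : Measurable fun t : ℝ => (ENNReal.ofReal |t|)⁻¹ :=
    measurable_id.abs.ennreal_ofReal.inv
  rw [volume_pi, Measure.restrict_pi_pi, ← lintegral_map h_meas (measurable_pi_apply i),
    Measure.pi_map_eval, lintegral_smul_measure, setLIntegral_Icc_inv_abs_eq_top]
  exact ENNReal.mul_top (Finset.prod_ne_zero_iff.2 fun j _ => by simp)

theorem setLIntegral_Ioi_pow_mul_indicator_Iic_inv_lt_top {m : ℕ} (hm : 1 ≤ m) (R : ℝ) :
    ∫⁻ r in Ioi 0, ENNReal.ofReal (r ^ m) * (Iic R).indicator (fun r => (ENNReal.ofReal r)⁻¹) r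
      < ∞ := by
  calc _ ≤ ∫⁻ r in Ioi 0, (Iic R).indicator (fun _ => ENNReal.ofReal (R ^ (m - 1))) r := by
        refine setLIntegral_mono' measurableSet_Ioi fun r (hr : 0 < r) => ?_
        by_cases hrR : r ∈ Iic R
        · have hr' : ENNReal.ofReal r ≠ 0 := by simpa using hr
          rw [indicator_of_mem hrR, indicator_of_mem hrR, ← Nat.sub_add_cancel hm, pow_succ,
            ENNReal.ofReal_mul (by positivity), mul_assoc,
            ENNReal.mul_inv_cancel hr' ENNReal.ofReal_ne_top, mul_one, Nat.add_sub_cancel]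
          exact ENNReal.ofReal_le_ofReal (pow_le_pow_left₀ hr.le hrR _)
        · simp [hrR]
    _ = ENNReal.ofReal (R ^ (m - 1)) * volume (Ioc 0 R) := by
        rw [lintegral_indicator_const measurableSet_Iic, Measure.restrict_apply measurableSet_Iic,
          Iic_inter_Ioi]
    _ < ∞ := ENNReal.mul_lt_top ENNReal.ofReal_lt_top measure_Ioc_lt_top

theorem EuclideanSpace.norm_le_sqrt_card {ι : Type*} [Fintype ι] {x : EuclideanSpace ℝ ι}
    (hx : ∀ i, |x i| ≤ 1) : ‖x‖ ≤ √(Fintype.card ι) := by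
  rw [EuclideanSpace.norm_eq]
  refine Real.sqrt_le_sqrt ?_
  calc ∑ i, ‖x i‖ ^ 2 ≤ ∑ _i : ι, (1 : ℝ) :=
        Finset.sum_le_sum fun i _ => pow_le_one₀ (norm_nonneg _) (hx i)
    _ = Fintype.card ι := by simp

theorem lintegral_eq_lintegral_toSphere_mul_lintegral_Ioi {E : Type*} [NormedAddCommGroup E]
    [NormedSpace ℝ E] [FiniteDimensional ℝ E] [Nontrivial E] [MeasurableSpace E] [BorelSpace E]
    (μ : Measure E) [μ.IsAddHaarMeasure] {f : E → ℝ≥0∞} {G : sphere (0 : E) 1 → ℝ≥0∞}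
    {H : ℝ → ℝ≥0∞} (hG : Measurable G) (hH : Measurable H)
    (hf : ∀ x (hx : x ≠ 0), f x = G (homeomorphUnitSphereProd E ⟨x, hx⟩).1 * H ‖x‖) :
    ∫⁻ x, f x ∂μ = (∫⁻ ω, G ω ∂μ.toSphere) *
      ∫⁻ r in Ioi 0, ENNReal.ofReal (r ^ (finrank ℝ E - 1)) * H r := by
  let polar := homeomorphUnitSphereProd E
  calc ∫⁻ x, f x ∂μ = ∫⁻ x : ({0}ᶜ : Set E), f x ∂μ.comap (↑) := by
        rw [lintegral_subtype_comap (measurableSet_singleton 0).compl, restrict_compl_singleton]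
    _ = ∫⁻ x : ({0}ᶜ : Set E), G (polar x).1 * H (polar x).2 ∂μ.comap (↑) :=
        lintegral_congr fun x => by simp [polar, hf x x.2]
    _ = ∫⁻ p, G p.1 * H p.2 ∂μ.toSphere.prod (Measure.volumeIoiPow (finrank ℝ E - 1)) :=
        μ.measurePreserving_homeomorphUnitSphereProd.lintegral_comp_emb
          polar.measurableEmbedding (fun p => G p.1 * H p.2)
    _ = (∫⁻ ω, G ω ∂μ.toSphere) * ∫⁻ r, H r ∂Measure.volumeIoiPow (finrank ℝ E - 1) :=
        lintegral_prod_mul hG.aemeasurable (hH.comp measurable_subtype_coe).aemeasurable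
    _ = _ := by
        rw [Measure.volumeIoiPow, lintegral_withDensity_eq_lintegral_mul _ (by fun_prop)
          (g := fun r : Ioi (0 : ℝ) => H r) (hH.comp measurable_subtype_coe)]
        exact congrArg _ (lintegral_subtype_comap measurableSet_Ioi
          (fun r => ENNReal.ofReal (r ^ (finrank ℝ E - 1)) * H r))

section InnerProductSpace

variable {E : Type*} [NormedAddCommGroup E] [InnerProductSpace ℝ E]

theorem OrthonormalBasis.exists_apply_eq {ι : Type*} [Fintype ι] (b : OrthonormalBasis ι ℝ E)
    (i : ι) {u : E} (hu : ‖u‖ = 1) : ∃ b' : OrthonormalBasis ι ℝ E, b' i = u :=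
  ⟨b.map (ℝ ∙ (b i - u))ᗮ.reflection, by
    rw [OrthonormalBasis.map_apply, Submodule.reflection_sub (by rw [b.norm_eq_one, hu])]⟩

variable [FiniteDimensional ℝ E] [MeasurableSpace E] [BorelSpace E]

theorem setLIntegral_closedBall_inv_abs_inner_eq_top {u : E} (hu : ‖u‖ = 1) :
    ∫⁻ x in closedBall 0 √(finrank ℝ E), (ENNReal.ofReal |⟪u, x⟫_ℝ|)⁻¹ = ∞ := by
  have : Nontrivial E := ⟨⟨u, 0, ne_zero_of_norm_ne_zero (by rw [hu]; exact one_ne_zero)⟩⟩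
  let i₀ : Fin (finrank ℝ E) := ⟨0, finrank_pos⟩
  obtain ⟨b, hb⟩ := (stdOrthonormalBasis ℝ E).exists_apply_eq i₀ hu
  let T : E → Fin (finrank ℝ E) → ℝ := fun x => WithLp.ofLp (b.repr x)
  have hT : MeasurePreserving T := (PiLp.volume_preserving_ofLp _).comp b.measurePreserving_repr
  have hT_coord (x : E) : T x i₀ = ⟪u, x⟫_ℝ := by
    rw [← hb]
    exact b.repr_apply_apply x i₀
  have h_cube : T ⁻¹' univ.pi (fun _ => Icc (-1) 1) ⊆ closedBall 0 √(finrank ℝ E) :=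
    fun x hx => by
      simpa using EuclideanSpace.norm_le_sqrt_card (x := b.repr x)
        fun i => abs_le.2 (hx i (mem_univ i))
  refine top_unique ?_
  calc ∞ = ∫⁻ z in univ.pi fun _ => Icc (-1 : ℝ) 1, (ENNReal.ofReal |z i₀|)⁻¹ :=
        (setLIntegral_univ_pi_Icc_inv_abs_eq_top i₀).symm
    _ = ∫⁻ x in T ⁻¹' univ.pi (fun _ => Icc (-1) 1), (ENNReal.ofReal |T x i₀|)⁻¹ :=
        (hT.setLIntegral_comp_preimage (MeasurableSet.univ_pi fun _ => measurableSet_Icc)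
          (by fun_prop)).symm
    _ ≤ _ := by
        simp_rw [hT_coord]
        exact lintegral_mono_set h_cube

theorem lintegral_toSphere_inv_abs_inner_eq_top_of_norm_eq_one (hE : 2 ≤ finrank ℝ E) {u : E}
    (hu : ‖u‖ = 1) :
    ∫⁻ ω : sphere (0 : E) 1, (ENNReal.ofReal |⟪u, (ω : E)⟫_ℝ|)⁻¹ ∂(volume : Measure E).toSphere
      = ∞ := by
  have : Nontrivial E := nontrivial_of_finrank_pos (by omega : 0 < finrank ℝ E)
  set R := √(finrank ℝ E : ℝ)
  -- `|⟪u, x⟫|⁻¹` is homogeneous of degree `-1`, so in polar coordinates it is `G ω * r⁻¹`.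
  have h_polar := lintegral_eq_lintegral_toSphere_mul_lintegral_Ioi (volume : Measure E)
    (f := (closedBall 0 R).indicator fun x => (ENNReal.ofReal |⟪u, x⟫_ℝ|)⁻¹)
    (G := fun ω => (ENNReal.ofReal |⟪u, (ω : E)⟫_ℝ|)⁻¹)
    (H := (Iic R).indicator fun r => (ENNReal.ofReal r)⁻¹) (by fun_prop)
    (measurable_id.ennreal_ofReal.inv.indicator measurableSet_Iic) fun x hx => by
      have hx' : ENNReal.ofReal ‖x‖ ≠ 0 := by simpa using hx
      by_cases hxR : ‖x‖ ≤ R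
      · rw [indicator_of_mem (mem_closedBall_zero_iff.2 hxR), indicator_of_mem (mem_Iic.2 hxR),
          homeomorphUnitSphereProd_apply_fst_coe, real_inner_smul_right, abs_mul, abs_inv,
          abs_norm, ENNReal.inv_ofReal_inv_mul (norm_pos_iff.2 hx), mul_comm, ← mul_assoc,
          ENNReal.inv_mul_cancel hx' ENNReal.ofReal_ne_top, one_mul]
      · simp [hxR]
  rw [lintegral_indicator measurableSet_closedBall,
    setLIntegral_closedBall_inv_abs_inner_eq_top hu] at h_polar
  by_contra h
  exact ENNReal.mul_ne_top h
    (setLIntegral_Ioi_pow_mul_indicator_Iic_inv_lt_top (by omega) R).ne h_polar.symm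

theorem lintegral_toSphere_inv_abs_inner_eq_top (hE : 2 ≤ finrank ℝ E) (n : E) :
    ∫⁻ ω : sphere (0 : E) 1, (ENNReal.ofReal |⟪n, (ω : E)⟫_ℝ|)⁻¹ ∂(volume : Measure E).toSphere
      = ∞ := by
  have : Nontrivial E := nontrivial_of_finrank_pos (by omega : 0 < finrank ℝ E)
  rcases eq_or_ne n 0 with rfl | hn
  · simp only [inner_zero_left, abs_zero, ENNReal.ofReal_zero, ENNReal.inv_zero, lintegral_const]
    exact ENNReal.top_mul (Measure.measure_univ_ne_zero.2 (Measure.toSphere_ne_zero _))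
  have hu : ‖‖n‖⁻¹ • n‖ = 1 := by
    rw [norm_smul, norm_inv, norm_norm, inv_mul_cancel₀ (norm_ne_zero_iff.2 hn)]
  have h_unit := lintegral_toSphere_inv_abs_inner_eq_top_of_norm_eq_one hE hu
  simp only [real_inner_smul_left, abs_mul, abs_inv, abs_norm,
    ENNReal.inv_ofReal_inv_mul (norm_pos_iff.2 hn)] at h_unit
  rw [lintegral_const_mul' _ _ ENNReal.ofReal_ne_top] at h_unit
  exact (ENNReal.mul_eq_top.1 h_unit).elim And.right fun h => absurd h.1 ENNReal.ofReal_ne_top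

end InnerProductSpace

theorem det_cols_eq_inner_crossProduct (a b c : EuclideanSpace ℝ (Fin 3)) :
    Matrix.det (Matrix.of fun i j : Fin 3 => (![a, b, c] j) i)
      = ⟪WithLp.toLp 2 (crossProduct a b), c⟫_ℝ := by
  simp [Matrix.det_fin_three, cross_apply, PiLp.inner_apply, Fin.sum_univ_three]
  ring

/-- **Divergence of the inverse-determinant integral on the sphere** (used in the proof of
Proposition 2):  `∫_{𝕊²}∫_{𝕊²}∫_{𝕊²} |det(ω₁, ω₂, ω₃)|⁻¹ dω₁ dω₂ dω₃ = +∞`, where the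
integrals are with respect to the surface measure on `𝕊² ⊆ ℝ³`. -/
theorem sphere_det_integral_diverges :
    (∫⁻ ω₁ : Metric.sphere (0 : Rd 3) 1,
      ∫⁻ ω₂ : Metric.sphere (0 : Rd 3) 1,
        ∫⁻ ω₃ : Metric.sphere (0 : Rd 3) 1,
          (ENNReal.ofReal
            |Matrix.det (Matrix.of fun i j : Fin 3 =>
              (![((ω₁ : Rd 3)), ((ω₂ : Rd 3)), ((ω₃ : Rd 3))] j) i)|)⁻¹
          ∂(volume : Measure (Rd 3)).toSphere
        ∂(volume : Measure (Rd 3)).toSphere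
      ∂(volume : Measure (Rd 3)).toSphere) = ∞ := by
  have h_inner (ω₁ ω₂ : sphere (0 : Rd 3) 1) :
      ∫⁻ ω₃ : sphere (0 : Rd 3) 1,
          (ENNReal.ofReal |⟪WithLp.toLp 2 (crossProduct ω₁ ω₂), (ω₃ : Rd 3)⟫_ℝ|)⁻¹
        ∂(volume : Measure (Rd 3)).toSphere = ∞ :=
    lintegral_toSphere_inv_abs_inner_eq_top (by simp) _
  have h_univ : (volume : Measure (Rd 3)).toSphere univ ≠ 0 :=
    Measure.measure_univ_ne_zero.2 (Measure.toSphere_ne_zero _)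
  simp_rw [det_cols_eq_inner_crossProduct, h_inner, lintegral_const, ENNReal.top_mul h_univ]
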